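/- arXiv:math/9712280 — 2 statements merged into one kernel-verified Lean document; each statement's English description precedes it below -/
import Mathlib

section
/- Suppose f satisfies (a), (b), (d) (the condition f(0) = 0 is not assumed). Then |f'(b)| ≥ (1 − |f(0)|)/(1 + |f(0)|), and the inequality is strict unless f is a holomorphic automorphism of the unit disk. -/
/-!
With `c = f 0`, the disc automorphism `mobius c` exchanging `c` and `0` turns `f` into
`g = mobius c ∘ f` with `g 0 = 0`. The Schwarz–Pick growth bound applied to `g z / z` gives
`‖g z‖ ≤ r (β + r) / (1 + β r)` for `r = ‖z‖` and `β = ‖g' 0‖ ≤ 1`, hence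
`1 - ‖f z‖ ≥ (1 - ‖c‖) / (1 + ‖c‖) * (1 + r) / (1 + β r) * (1 - r)`.
Along the radius to `b`, `(1 - ‖f (r b)‖) / (1 - r)` is at most the difference quotient at `b`,
so `‖f' b‖ ≥ (1 - ‖c‖) / (1 + ‖c‖) * 2 / (1 + β)`. If `β = 1`, the equality case of the Schwarz
lemma makes `g` a rotation and `f` an automorphism; otherwise `2 / (1 + β) > 1`.
-/

open Complex Filter Metric Set Topology ComplexConjugate

noncomputable def mobius (c z : ℂ) : ℂ := (c - z) / (1 - conj c * z)

section Mobius

variable {c z : ℂ}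

theorem mobius_self (c : ℂ) : mobius c c = 0 := by simp [mobius]

theorem one_sub_conj_mul_ne_zero (hc : ‖c‖ < 1) (hz : ‖z‖ ≤ 1) : 1 - conj c * z ≠ 0 := by
  refine sub_ne_zero.2 fun h => ?_
  have : ‖conj c * z‖ < 1 := by
    rw [norm_mul, Complex.norm_conj]
    nlinarith [norm_nonneg c, norm_nonneg z]
  simp [← h] at this

theorem one_sub_sq_norm_mobius (h : 1 - conj c * z ≠ 0) :
    1 - ‖mobius c z‖ ^ 2 = (1 - ‖c‖ ^ 2) * (1 - ‖z‖ ^ 2) / ‖1 - conj c * z‖ ^ 2 := by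
  have h2 : normSq (1 - conj c * z) ≠ 0 := (normSq_pos.2 h).ne'
  rw [mobius, norm_div, div_pow]
  simp only [Complex.sq_norm]
  rw [one_sub_div h2, div_left_inj' h2]
  simp only [normSq_apply, sub_re, sub_im, mul_re, mul_im, conj_re, conj_im, one_re, one_im]
  ring

theorem norm_mobius_le (hc : ‖c‖ < 1) (hz : ‖z‖ ≤ 1) :
    ‖mobius c z‖ ≤ (‖c‖ + ‖z‖) / (1 + ‖c‖ * ‖z‖) := by
  have hne := one_sub_conj_mul_ne_zero hc hz
  have hden : ‖1 - conj c * z‖ ≤ 1 + ‖c‖ * ‖z‖ := by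
    simpa [norm_mul, Complex.norm_conj] using norm_sub_le (1 : ℂ) (conj c * z)
  have hpos : 0 < ‖1 - conj c * z‖ := norm_pos_iff.2 hne
  have hc0 := norm_nonneg c
  have hz0 := norm_nonneg z
  have hid := one_sub_sq_norm_mobius hne
  rw [eq_div_iff (by positivity)] at hid
  have hm : 0 ≤ 1 - ‖mobius c z‖ ^ 2 := by
    refine nonneg_of_mul_nonneg_left (hid ▸ ?_) (by positivity : 0 < ‖1 - conj c * z‖ ^ 2)
    exact mul_nonneg (by nlinarith) (by nlinarith)
  rw [le_div_iff₀ (by positivity)]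
  refine (pow_le_pow_iff_left₀ (by positivity) (by positivity) two_ne_zero).1 ?_
  have hsq : ‖1 - conj c * z‖ ^ 2 ≤ (1 + ‖c‖ * ‖z‖) ^ 2 := by gcongr
  -- `(1 + x y) ^ 2 - (x + y) ^ 2 = (1 - x ^ 2) * (1 - y ^ 2)`
  nlinarith [mul_le_mul_of_nonneg_left hsq hm]

theorem norm_mobius_le_one (hc : ‖c‖ < 1) (hz : ‖z‖ ≤ 1) : ‖mobius c z‖ ≤ 1 := by
  refine (norm_mobius_le hc hz).trans ((div_le_one (by positivity)).2 ?_)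
  nlinarith [norm_nonneg c]

theorem norm_mobius_lt_one (hc : ‖c‖ < 1) (hz : ‖z‖ < 1) : ‖mobius c z‖ < 1 := by
  refine (norm_mobius_le hc hz.le).trans_lt ((div_lt_one (by positivity)).2 ?_)
  nlinarith [norm_nonneg c]

theorem mobius_mobius (hc : ‖c‖ < 1) (hz : ‖z‖ ≤ 1) : mobius c (mobius c z) = z := by
  have h1 := one_sub_conj_mul_ne_zero hc hz
  have h2 := one_sub_conj_mul_ne_zero hc (norm_mobius_le_one hc hz)
  unfold mobius at h2 ⊢
  rw [div_eq_iff h2, sub_div' h1, mul_div_assoc', one_sub_div h1, mul_div_assoc',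
    div_left_inj' h1]
  ring

theorem differentiableOn_mobius (hc : ‖c‖ < 1) :
    DifferentiableOn ℂ (mobius c) (closedBall 0 1) := by
  refine ((differentiableOn_const c).sub differentiableOn_id).div
    ((differentiableOn_const 1).sub ((differentiableOn_const _).mul differentiableOn_id))
    fun z hz => one_sub_conj_mul_ne_zero hc (mem_closedBall_zero_iff.1 hz)

theorem mapsTo_mobius_closedBall (hc : ‖c‖ < 1) :
    MapsTo (mobius c) (closedBall 0 1) (closedBall 0 1) := fun _ hz =>
  mem_closedBall_zero_iff.2 (norm_mobius_le_one hc (mem_closedBall_zero_iff.1 hz))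

theorem bijOn_mobius_ball (hc : ‖c‖ < 1) : BijOn (mobius c) (ball 0 1) (ball 0 1) := by
  have hmaps : MapsTo (mobius c) (ball 0 1) (ball 0 1) := fun _ hz =>
    mem_ball_zero_iff.2 (norm_mobius_lt_one hc (mem_ball_zero_iff.1 hz))
  have hinv : LeftInvOn (mobius c) (mobius c) (ball 0 1) := fun _ hz =>
    mobius_mobius hc (mem_ball_zero_iff.1 hz).le
  exact InvOn.bijOn ⟨hinv, hinv⟩ hmaps hmaps

end Mobius

theorem add_div_one_add_mul_le {a x y : ℝ} (ha₀ : 0 ≤ a) (ha₁ : a ≤ 1) (hx : 0 ≤ x)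
    (hxy : x ≤ y) : (a + x) / (1 + a * x) ≤ (a + y) / (1 + a * y) := by
  rw [div_le_div_iff₀ (by positivity) (by nlinarith)]
  nlinarith [mul_nonneg (sub_nonneg.2 hxy) (mul_nonneg (sub_nonneg.2 ha₁) (by linarith : 0 ≤ 1 + a))]

noncomputable def centered (f : ℂ → ℂ) (z : ℂ) : ℂ := mobius (f 0) (f z)

theorem centered_zero (f : ℂ → ℂ) : centered f 0 = 0 := mobius_self _

section Centered

variable {f : ℂ → ℂ} (hc : ‖f 0‖ < 1) (hf : MapsTo f (ball 0 1) (closedBall 0 1))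
include hc hf

theorem mapsTo_centered : MapsTo (centered f) (ball 0 1) (closedBall 0 1) :=
  (mapsTo_mobius_closedBall hc).comp hf

theorem mobius_centered {z : ℂ} (hz : ‖z‖ < 1) : mobius (f 0) (centered f z) = f z :=
  mobius_mobius hc (mem_closedBall_zero_iff.1 (hf (mem_ball_zero_iff.2 hz)))

theorem differentiableOn_centered (hd : DifferentiableOn ℂ f (ball 0 1)) :
    DifferentiableOn ℂ (centered f) (ball 0 1) :=
  (differentiableOn_mobius hc).comp hd hf

end Centered

theorem norm_le_add_div_one_add_mul_of_mapsTo_ball {f : ℂ → ℂ}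
    (hd : DifferentiableOn ℂ f (ball 0 1)) (hf : MapsTo f (ball 0 1) (closedBall 0 1))
    {z : ℂ} (hz : ‖z‖ < 1) : ‖f z‖ ≤ (‖f 0‖ + ‖z‖) / (1 + ‖f 0‖ * ‖z‖) := by
  have hfz : ‖f z‖ ≤ 1 := mem_closedBall_zero_iff.1 (hf (mem_ball_zero_iff.2 hz))
  have hf0 : ‖f 0‖ ≤ 1 := mem_closedBall_zero_iff.1 (hf (mem_ball_self one_pos))
  rcases hf0.eq_or_lt with hc | hc
  · rwa [hc, one_mul, div_self (by positivity)]
  have hgz : ‖centered f z‖ ≤ ‖z‖ :=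
    Complex.norm_le_norm_of_mapsTo_ball (differentiableOn_centered hc hf hd)
      (mapsTo_centered hc hf) (centered_zero f) hz
  calc ‖f z‖ ≤ (‖f 0‖ + ‖centered f z‖) / (1 + ‖f 0‖ * ‖centered f z‖) := by
        rw [← mobius_centered hc hf hz]; exact norm_mobius_le hc (hgz.trans hz.le)
    _ ≤ (‖f 0‖ + ‖z‖) / (1 + ‖f 0‖ * ‖z‖) :=
        add_div_one_add_mul_le (norm_nonneg _) hc.le (norm_nonneg _) hgz

theorem norm_le_mul_add_div_one_add_mul_of_mapsTo_ball {g : ℂ → ℂ}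
    (hd : DifferentiableOn ℂ g (ball 0 1)) (hg : MapsTo g (ball 0 1) (closedBall 0 1))
    (hg0 : g 0 = 0) {z : ℂ} (hz : ‖z‖ < 1) :
    ‖g z‖ ≤ ‖z‖ * ((‖deriv g 0‖ + ‖z‖) / (1 + ‖deriv g 0‖ * ‖z‖)) := by
  have hg' : MapsTo g (ball 0 1) (closedBall (g 0) 1) := by rwa [hg0]
  have hψd : DifferentiableOn ℂ (dslope g 0) (ball 0 1) :=
    (Complex.differentiableOn_dslope (ball_mem_nhds 0 one_pos)).2 hd
  have hψ : MapsTo (dslope g 0) (ball 0 1) (closedBall 0 1) := fun w hw =>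
    mem_closedBall_zero_iff.2 <| by
      simpa using Complex.norm_dslope_le_div_of_mapsTo_ball hd hg' hw
  have hgz : g z = z * dslope g 0 z := by simpa [hg0] using (sub_smul_dslope g 0 z).symm
  rw [hgz, norm_mul, ← dslope_same]
  exact mul_le_mul_of_nonneg_left
    (norm_le_add_div_one_add_mul_of_mapsTo_ball hψd hψ hz) (norm_nonneg z)

theorem bijOn_ball_of_norm_deriv_eq_one {g : ℂ → ℂ}
    (hd : DifferentiableOn ℂ g (ball 0 1)) (hg : MapsTo g (ball 0 1) (closedBall 0 1))
    (hg0 : g 0 = 0) (hderiv : ‖deriv g 0‖ = 1) : BijOn g (ball 0 1) (ball 0 1) := by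
  set C := deriv g 0
  have hC : C ≠ 0 := norm_ne_zero_iff.1 (by rw [hderiv]; exact one_ne_zero)
  have hrot : EqOn g (· * C) (ball 0 1) := by
    have := Complex.affine_of_mapsTo_ball_of_norm_dslope_eq_div hd (by rwa [hg0])
      (mem_ball_self one_pos) (by rw [dslope_same, hderiv, div_one])
    intro z hz
    simpa [hg0, dslope_same, mul_comm] using this hz
  have hmaps : ∀ u : ℂ, ‖u‖ = 1 → MapsTo (· * u) (ball (0 : ℂ) 1) (ball 0 1) :=
    fun u hu w hw => by simpa [hu] using hw
  refine BijOn.congr (InvOn.bijOn (f' := (· * C⁻¹)) ⟨fun w _ => ?_, fun w _ => ?_⟩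
    (hmaps C hderiv) (hmaps C⁻¹ (by rw [norm_inv, hderiv, inv_one]))) hrot.symm
  all_goals simp [hC]

section SelfMap

variable {f : ℂ → ℂ} (hc : ‖f 0‖ < 1) (hf : MapsTo f (ball 0 1) (closedBall 0 1))
  (hd : DifferentiableOn ℂ f (ball 0 1))
include hc hf hd

theorem norm_deriv_centered_le_one : ‖deriv (centered f) 0‖ ≤ 1 :=
  Complex.norm_deriv_le_one_of_mapsTo_ball (differentiableOn_centered hc hf hd)
    (by rw [centered_zero]; exact mapsTo_centered hc hf) one_pos

theorem bijOn_ball_of_norm_deriv_centered_eq_one (h : ‖deriv (centered f) 0‖ = 1) :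
    BijOn f (ball 0 1) (ball 0 1) :=
  ((bijOn_mobius_ball hc).comp
    (bijOn_ball_of_norm_deriv_eq_one (differentiableOn_centered hc hf hd) (mapsTo_centered hc hf)
      (centered_zero f) h)).congr fun _ hz => mobius_centered hc hf (mem_ball_zero_iff.1 hz)

theorem le_one_sub_norm_of_mapsTo_ball {z : ℂ} (hz : ‖z‖ < 1) :
    (1 - ‖f 0‖) / (1 + ‖f 0‖) * ((1 + ‖z‖) / (1 + ‖deriv (centered f) 0‖ * ‖z‖)) * (1 - ‖z‖) ≤
      1 - ‖f z‖ := by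
  set a := ‖f 0‖
  set β := ‖deriv (centered f) 0‖
  set r := ‖z‖
  set t := ‖centered f z‖
  have ha0 : 0 ≤ a := norm_nonneg _
  have hβ : 0 ≤ β := norm_nonneg _
  have hr : 0 ≤ r := norm_nonneg _
  have ht0 : 0 ≤ t := norm_nonneg _
  have ht1 : t ≤ 1 :=
    mem_closedBall_zero_iff.1 (mapsTo_centered hc hf (mem_ball_zero_iff.2 hz))
  have htr : t ≤ r * ((β + r) / (1 + β * r)) :=
    norm_le_mul_add_div_one_add_mul_of_mapsTo_ball (differentiableOn_centered hc hf hd)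
      (mapsTo_centered hc hf) (centered_zero f) hz
  have hfz : ‖f z‖ ≤ (a + t) / (1 + a * t) := by
    rw [← mobius_centered hc hf hz]; exact norm_mobius_le hc ht1
  calc (1 - a) / (1 + a) * ((1 + r) / (1 + β * r)) * (1 - r)
      = (1 - a) / (1 + a) * (1 - r * ((β + r) / (1 + β * r))) := by
        field_simp
        ring
    _ ≤ (1 - a) / (1 + a) * (1 - t) := by gcongr
    _ = (1 - a) * (1 - t) / (1 + a) := by ring
    _ ≤ (1 - a) * (1 - t) / (1 + a * t) := by
        gcongr
        exact mul_le_of_le_one_right ha0 ht1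
    _ = 1 - (a + t) / (1 + a * t) := by field_simp; ring
    _ ≤ 1 - ‖f z‖ := by linarith

end SelfMap

section Boundary

variable {b : ℂ}

theorem norm_ofReal_mul_of_norm_eq_one (hb : ‖b‖ = 1) {r : ℝ} (hr : 0 ≤ r) :
    ‖(r : ℂ) * b‖ = r := by
  rw [norm_mul, hb, mul_one, norm_real, Real.norm_of_nonneg hr]

theorem tendsto_ofReal_mul_nhdsLT_one (hb : ‖b‖ = 1) :
    Tendsto (fun r : ℝ => (r : ℂ) * b) (𝓝[<] 1) (𝓝[ball 0 1] b) := by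
  refine tendsto_nhdsWithin_iff.2 ⟨?_, ?_⟩
  · simpa using ((continuous_ofReal.mul continuous_const).tendsto (1 : ℝ)
      (f := fun r : ℝ => (r : ℂ) * b)).mono_left nhdsWithin_le_nhds
  · filter_upwards [Ioo_mem_nhdsLT zero_lt_one] with r hr
    rw [mem_ball_zero_iff, norm_ofReal_mul_of_norm_eq_one hb hr.1.le]
    exact hr.2

theorem le_norm_of_mul_one_sub_le {f : ℂ → ℂ} {f' : ℂ} {φ : ℝ → ℝ} {L : ℝ}
    (hb : ‖b‖ = 1) (hfb : ‖f b‖ = 1)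
    (hderiv : Tendsto (fun z => (f z - f b) / (z - b)) (𝓝[ball 0 1] b) (𝓝 f'))
    (hφ : ∀ r ∈ Ioo (0 : ℝ) 1, φ r * (1 - r) ≤ 1 - ‖f (r * b)‖)
    (hL : Tendsto φ (𝓝[<] 1) (𝓝 L)) : L ≤ ‖f'‖ := by
  refine le_of_tendsto_of_tendsto hL
    ((continuous_norm.tendsto f').comp (hderiv.comp (tendsto_ofReal_mul_nhdsLT_one hb))) ?_
  filter_upwards [Ioo_mem_nhdsLT zero_lt_one] with r hr
  have hdist : ‖(r : ℂ) * b - b‖ = 1 - r := by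
    rw [← norm_neg, show -((r : ℂ) * b - b) = ((1 - r : ℝ) : ℂ) * b by push_cast; ring,
      norm_ofReal_mul_of_norm_eq_one hb (by linarith [hr.2])]
  have hnum : 1 - ‖f (r * b)‖ ≤ ‖f (r * b) - f b‖ := by
    simpa [hfb, norm_sub_rev] using norm_sub_norm_le (f b) (f (r * b))
  rw [Function.comp_apply, Function.comp_apply, norm_div, hdist,
    le_div_iff₀ (by linarith [hr.2])]
  exact (hφ r hr).trans hnum

end Boundary

theorem general_boundary_corollary_general
    (f : ℂ → ℂ) (b fb' : ℂ)
    (ha : DifferentiableOn ℂ f {z : ℂ | ‖z‖ < 1})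
    (hb : ∀ z : ℂ, ‖z‖ < 1 → ‖(f z)‖ < 1)
    (hbmod : ‖b‖ = 1)
    (hfb : ‖(f b)‖ = 1)
    (hderiv : Tendsto (fun z => (f z - f b) / (z - b))
      (nhdsWithin b {z : ℂ | ‖z‖ < 1}) (nhds fb')) :
    (1 - ‖(f 0)‖) / (1 + ‖(f 0)‖) ≤ ‖fb'‖ ∧
      (¬ Set.BijOn f {z : ℂ | ‖z‖ < 1} {z : ℂ | ‖z‖ < 1} →
        (1 - ‖(f 0)‖) / (1 + ‖(f 0)‖) < ‖fb'‖) := by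
  have hD : {z : ℂ | ‖z‖ < 1} = ball 0 1 := by ext; simp
  rw [hD] at ha hderiv ⊢
  have hc : ‖f 0‖ < 1 := hb 0 (by simp)
  have hf : MapsTo f (ball 0 1) (closedBall 0 1) := fun z hz =>
    mem_closedBall_zero_iff.2 (hb z (mem_ball_zero_iff.1 hz)).le
  set K := (1 - ‖f 0‖) / (1 + ‖f 0‖)
  set β := ‖deriv (centered f) 0‖
  have hK : 0 < K := div_pos (by linarith) (by positivity)
  have hβ : β ≤ 1 := norm_deriv_centered_le_one hc hf ha
  have hlim : K * ((1 + 1) / (1 + β * 1)) ≤ ‖fb'‖ := by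
    refine le_norm_of_mul_one_sub_le (φ := fun r => K * ((1 + r) / (1 + β * r))) hbmod hfb
      hderiv (fun r hr => ?_) ?_
    · have hrb := norm_ofReal_mul_of_norm_eq_one hbmod hr.1.le
      simpa only [hrb] using le_one_sub_norm_of_mapsTo_ball hc hf ha (hrb.trans_lt hr.2)
    · refine ContinuousAt.tendsto ?_ |>.mono_left nhdsWithin_le_nhds
      exact continuousAt_const.mul ((continuousAt_const.add continuousAt_id).div
        (continuousAt_const.add (continuousAt_const.mul continuousAt_id)) (by positivity))
  constructor
  · calc K ≤ K * ((1 + 1) / (1 + β * 1)) :=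
          le_mul_of_one_le_right hK.le (by rw [one_le_div (by positivity)]; linarith)
      _ ≤ ‖fb'‖ := hlim
  · intro hnb
    have hβ' : β < 1 :=
      hβ.lt_of_ne fun h => hnb (bijOn_ball_of_norm_deriv_centered_eq_one hc hf ha h)
    calc K < K * ((1 + 1) / (1 + β * 1)) :=
          lt_mul_of_one_lt_right hK (by rw [one_lt_div (by positivity)]; linarith)
      _ ≤ ‖fb'‖ := hlim

/-- If `f` satisfies (a), (b), (d) (not assuming `f 0 = 0`), then
`|f'(b)| ≥ (1 - |f 0|) / (1 + |f 0|)`, with strict inequality unless `f` is a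
holomorphic automorphism of the unit disk (i.e., maps the disk bijectively onto itself). -/
theorem general_boundary_corollary
    (f : ℂ → ℂ) (b fb' : ℂ)
    (ha : DifferentiableOn ℂ f {z : ℂ | ‖z‖ < 1})
    (hb : ∀ z : ℂ, ‖z‖ < 1 → ‖(f z)‖ < 1)
    (hbmod : ‖b‖ = 1)
    (hcont : ContinuousWithinAt f ({z : ℂ | ‖z‖ < 1} ∪ {b}) b)
    (hfb : ‖(f b)‖ = 1)
    (hderiv : Tendsto (fun z => (f z - f b) / (z - b))
      (nhdsWithin b {z : ℂ | ‖z‖ < 1}) (nhds fb')) :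
    (1 - ‖(f 0)‖) / (1 + ‖(f 0)‖) ≤ ‖fb'‖ ∧
      (¬ Set.BijOn f {z : ℂ | ‖z‖ < 1} {z : ℂ | ‖z‖ < 1} →
        (1 - ‖(f 0)‖) / (1 + ‖(f 0)‖) < ‖fb'‖) :=
  general_boundary_corollary_general f b fb' ha hb hbmod hfb hderiv
end

section
/- (Higher-order interior Schwarz Lemma) Let f be holomorphic on the open unit disk D with |f(z)| < 1 on D, let k ≥ 1, and suppose the Taylor coefficients of f at 0 satisfy a₀ = a₁ = ⋯ = a_{k−1} = 0. Then for every z ∈ D, |f(z)| ≤ |z|^k · (|z| + |a_k|)/(1 + |a_k| |z|). -/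
/-!
Since the first `k` Taylor coefficients vanish, `f z = z ^ k * g z` with `g` holomorphic on the
disk and `g 0 = aₖ`; letting `r → 1` in the maximum modulus principle on `‖z‖ ≤ r` gives
`‖g‖ ≤ 1`. The estimate is then the Schwarz–Pick bound for `g`: composing `g` with the disk
automorphism `w ↦ (w - b) / (1 - b̄ w)`, `b = g 0`, gives a self-map of the disk fixing `0`, so
the Schwarz lemma applies, and undoing the automorphism bounds `‖g z‖` by the maximum of
`‖(v + b) / (1 + b̄ v)‖` over `‖v‖ ≤ ‖z‖`, which is `(‖z‖ + ‖b‖) / (1 + ‖b‖ ‖z‖)`.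
-/

open Complex Metric Set Function Filter Topology ComplexConjugate

theorem AnalyticAt.iterate_swap_dslope_self {𝕜 : Type*} [NontriviallyNormedField 𝕜]
    [CompleteSpace 𝕜] [CharZero 𝕜] {f : 𝕜 → 𝕜} {x : 𝕜} (hf : AnalyticAt 𝕜 f x) (n : ℕ) :
    (swap dslope x)^[n] f x = iteratedDeriv n f x / n.factorial := by
  rw [← (hf.hasFPowerSeriesAt.has_fpower_series_iterate_dslope_fslope n).coeff_zero 1,
    ← FormalMultilinearSeries.coeff, FormalMultilinearSeries.coeff_iterate_fslope, zero_add,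
    FormalMultilinearSeries.coeff_ofScalars]

theorem DifferentiableOn.iterate_swap_dslope {E : Type*} [NormedAddCommGroup E]
    [NormedSpace ℂ E] [CompleteSpace E] {f : ℂ → E} {s : Set ℂ} {c : ℂ}
    (hf : DifferentiableOn ℂ f s) (hc : s ∈ 𝓝 c) (n : ℕ) :
    DifferentiableOn ℂ ((swap dslope c)^[n] f) s := by
  induction n with
  | zero => exact hf
  | succ n ih =>
    rw [iterate_succ_apply']
    exact (differentiableOn_dslope hc).2 ih

theorem norm_le_div_pow_of_forall_norm_pow_mul_le {E : Type*} [NormedAddCommGroup E]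
    [NormedSpace ℂ E] {g : ℂ → E} {k : ℕ} {R M : ℝ} (hd : DifferentiableOn ℂ g (ball 0 R))
    (hM : ∀ w ∈ ball (0 : ℂ) R, ‖w‖ ^ k * ‖g w‖ ≤ M) {z : ℂ} (hz : z ∈ ball 0 R) :
    ‖g z‖ ≤ M / R ^ k := by
  rw [mem_ball_zero_iff] at hz
  have hR : 0 < R := (norm_nonneg z).trans_lt hz
  have hlim : Tendsto (fun r : ℝ ↦ M / r ^ k) (𝓝[<] R) (𝓝 (M / R ^ k)) :=
    ContinuousAt.continuousWithinAt (by fun_prop (disch := positivity))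
  refine ge_of_tendsto hlim ?_
  filter_upwards [Ioo_mem_nhdsLT hz] with r ⟨hzr, hrR⟩
  have hr : 0 < r := (norm_nonneg z).trans_lt hzr
  refine norm_le_of_forall_mem_frontier_norm_le isBounded_ball
    (hd.diffContOnCl_ball (closedBall_subset_ball hrR)) (fun w hw ↦ ?_)
    (subset_closure (mem_ball_zero_iff.2 hzr))
  rw [frontier_ball 0 hr.ne', mem_sphere_zero_iff_norm] at hw
  rw [le_div_iff₀' (by positivity), ← hw]
  exact hM w (mem_ball_zero_iff.2 (hw ▸ hrR))

noncomputable def diskMobius (b w : ℂ) : ℂ := (w - b) / (1 - conj b * w)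

theorem sq_norm_one_sub_conj_mul_sub_sq_norm_sub (b w : ℂ) :
    ‖1 - conj b * w‖ ^ 2 - ‖w - b‖ ^ 2 = (1 - ‖b‖ ^ 2) * (1 - ‖w‖ ^ 2) := by
  simp only [Complex.sq_norm, normSq_apply, sub_re, sub_im, mul_re, mul_im, conj_re, conj_im,
    one_re, one_im]
  ring

theorem one_sub_conj_mul_ne_zero_s14 {b w : ℂ} (hb : ‖b‖ < 1) (hw : ‖w‖ ≤ 1) :
    1 - conj b * w ≠ 0 := by
  intro h
  have : ‖conj b * w‖ = 1 := by rw [← sub_eq_zero.1 h, norm_one]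
  rw [norm_mul, norm_conj] at this
  nlinarith [norm_nonneg b, norm_nonneg w]

theorem diskMobius_self (b : ℂ) : diskMobius b b = 0 := by
  simp [diskMobius]

theorem norm_diskMobius_le_one {b w : ℂ} (hb : ‖b‖ ≤ 1) (hw : ‖w‖ ≤ 1) :
    ‖diskMobius b w‖ ≤ 1 := by
  have hb2 : ‖b‖ ^ 2 ≤ 1 := pow_le_one₀ (norm_nonneg b) hb
  have hw2 : ‖w‖ ^ 2 ≤ 1 := pow_le_one₀ (norm_nonneg w) hw
  have key := sq_norm_one_sub_conj_mul_sub_sq_norm_sub b w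
  rw [diskMobius, norm_div]
  refine div_le_one_of_le₀ ((pow_le_pow_iff_left₀ (norm_nonneg _) (norm_nonneg _)
    two_ne_zero).1 ?_) (norm_nonneg _)
  nlinarith [mul_nonneg (sub_nonneg.2 hb2) (sub_nonneg.2 hw2)]

theorem norm_diskMobius_le {b v : ℂ} {s : ℝ} (hb : ‖b‖ ≤ 1) (hv : ‖v‖ ≤ s) (hs : s ≤ 1) :
    ‖diskMobius b v‖ ≤ (s + ‖b‖) / (1 + ‖b‖ * s) := by
  set β := ‖b‖
  set r := ‖v‖
  have hβ : 0 ≤ β := norm_nonneg b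
  have hr : 0 ≤ r := norm_nonneg v
  have hs0 : 0 ≤ s := hr.trans hv
  rw [diskMobius, norm_div]
  -- a vanishing denominator gives the junk value `0`
  rcases (norm_nonneg (1 - conj b * v)).eq_or_lt with hD | hD
  · rw [← hD, div_zero]
    positivity
  rw [div_le_div_iff₀ hD (by positivity)]
  have hD_le : ‖1 - conj b * v‖ ≤ 1 + β * r := by
    simpa [norm_mul] using norm_sub_le (1 : ℂ) (conj b * v)
  -- the difference of the two sides factors as `(s - r) * ((s + r) (1 + β²) + 2β (1 + s r))`
  have hmono : (1 - s ^ 2) * (1 + β * r) ^ 2 ≤ (1 - r ^ 2) * (1 + β * s) ^ 2 := by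
    nlinarith [mul_nonneg (sub_nonneg.2 hv) (by positivity :
      0 ≤ (s + r) * (1 + β ^ 2) + 2 * β * (1 + s * r))]
  have hβ2 : 0 ≤ 1 - β ^ 2 := by nlinarith
  have hs2 : 0 ≤ 1 - s ^ 2 := by nlinarith
  have hD_sq : ‖1 - conj b * v‖ ^ 2 ≤ (1 + β * r) ^ 2 := pow_le_pow_left₀ hD.le hD_le 2
  refine (pow_le_pow_iff_left₀ (by positivity) (by positivity) two_ne_zero).1 ?_
  rw [mul_pow, mul_pow]
  -- with `d = ‖1 - b̄ v‖`, the identity turns `(s + β)² d² - ‖v - b‖² (1 + β s)²` into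
  -- `(1 - β²) (1 - s²) ((1 + β r)² - d²) + (1 - β²) ((1 - r²) (1 + β s)² - (1 - s²) (1 + β r)²)`
  nlinarith [sq_norm_one_sub_conj_mul_sub_sq_norm_sub b v, mul_le_mul_of_nonneg_left hmono hβ2,
    mul_le_mul_of_nonneg_left hD_sq (mul_nonneg hβ2 hs2)]

theorem diskMobius_neg_diskMobius {b w : ℂ} (hb : ‖b‖ < 1) (hw : ‖w‖ ≤ 1) :
    diskMobius (-b) (diskMobius b w) = w := by
  have hD := one_sub_conj_mul_ne_zero_s14 hb hw
  have hB := one_sub_conj_mul_ne_zero_s14 hb hb.le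
  rw [diskMobius, diskMobius, map_neg, sub_neg_eq_add, neg_mul, sub_neg_eq_add,
    div_add' _ _ _ hD, mul_div_assoc', one_add_div hD, div_div_div_cancel_right₀ hD,
    show 1 - conj b * w + conj b * (w - b) = 1 - conj b * b by ring, div_eq_iff hB]
  ring

theorem differentiableOn_diskMobius {b : ℂ} (hb : ‖b‖ < 1) :
    DifferentiableOn ℂ (diskMobius b) (closedBall 0 1) := by
  refine DifferentiableOn.div (by fun_prop) (by fun_prop) fun w hw ↦ ?_
  exact one_sub_conj_mul_ne_zero_s14 hb (mem_closedBall_zero_iff.1 hw)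

theorem norm_le_schwarzPick_bound_of_mapsTo_ball {g : ℂ → ℂ} (hd : DifferentiableOn ℂ g (ball 0 1))
    (hg : MapsTo g (ball 0 1) (closedBall 0 1)) {z : ℂ} (hz : z ∈ ball 0 1) :
    ‖g z‖ ≤ (‖z‖ + ‖g 0‖) / (1 + ‖g 0‖ * ‖z‖) := by
  have hb : ‖g 0‖ ≤ 1 := mem_closedBall_zero_iff.1 (hg (mem_ball_self one_pos))
  have hgz : ‖g z‖ ≤ 1 := mem_closedBall_zero_iff.1 (hg hz)
  rw [mem_ball_zero_iff] at hz
  rcases hb.eq_or_lt with hb | hb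
  · rwa [hb, one_mul, add_comm, div_self (by positivity)]
  have hh : ‖diskMobius (g 0) (g z)‖ ≤ ‖z‖ :=
    norm_le_norm_of_mapsTo_ball (f := diskMobius (g 0) ∘ g)
      ((differentiableOn_diskMobius hb).comp hd hg)
      (fun w hw ↦ mem_closedBall_zero_iff.2 (norm_diskMobius_le_one hb.le
        (mem_closedBall_zero_iff.1 (hg hw))))
      (diskMobius_self _) hz
  rw [← diskMobius_neg_diskMobius hb hgz]
  simpa using norm_diskMobius_le (b := -g 0) (by simpa using hb.le) hh hz.le

theorem higher_order_interior_schwarz_general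
    (f : ℂ → ℂ) (k : ℕ)
    (ha : DifferentiableOn ℂ f {z : ℂ | ‖z‖ < 1})
    (hb : ∀ z : ℂ, ‖z‖ < 1 → ‖f z‖ < 1)
    (hcoeff : ∀ n < k, iteratedDeriv n f 0 / (Nat.factorial n : ℂ) = 0) :
    ∀ z : ℂ, ‖z‖ < 1 →
      ‖f z‖ ≤ ‖z‖ ^ k *
        ((‖z‖ + ‖iteratedDeriv k f 0 / (Nat.factorial k : ℂ)‖) /
          (1 + ‖iteratedDeriv k f 0 / (Nat.factorial k : ℂ)‖ *
            ‖z‖)) := by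
  intro z hz
  have hdisk : {z : ℂ | ‖z‖ < 1} = ball 0 1 := by ext; simp
  rw [hdisk] at ha
  have h0 : ball (0 : ℂ) 1 ∈ 𝓝 0 := ball_mem_nhds 0 one_pos
  have hf0 : AnalyticAt ℂ f 0 := ha.analyticAt h0
  set g := (swap dslope (0 : ℂ))^[k] f
  have hlow : ∀ m < k, (swap dslope (0 : ℂ))^[m] f 0 = 0 := fun m hm ↦ by
    rw [hf0.iterate_swap_dslope_self, hcoeff m hm]
  have hfg (w : ℂ) : f w = w ^ k * g w := by
    simpa using (pow_sub_smul_iterate_dslope_of_zero k hlow w).symm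
  have hgd : DifferentiableOn ℂ g (ball 0 1) := ha.iterate_swap_dslope h0 k
  have hg : MapsTo g (ball 0 1) (closedBall 0 1) := by
    have hfg_le : ∀ u ∈ ball (0 : ℂ) 1, ‖u‖ ^ k * ‖g u‖ ≤ 1 := fun u hu ↦ by
      rw [← norm_pow, ← norm_mul, ← hfg]
      exact (hb u (mem_ball_zero_iff.1 hu)).le
    intro w hw
    simpa using norm_le_div_pow_of_forall_norm_pow_mul_le hgd hfg_le hw
  rw [← hf0.iterate_swap_dslope_self, hfg, norm_mul, norm_pow]
  gcongr
  exact norm_le_schwarzPick_bound_of_mapsTo_ball hgd hg (mem_ball_zero_iff.2 hz)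

/-- **Higher-order interior Schwarz Lemma.** Let `f` be holomorphic on the unit disk
with `|f| < 1` there, `k ≥ 1`, and suppose the Taylor coefficients
`aₙ = f⁽ⁿ⁾(0)/n!` vanish for all `n < k`. Then with `aₖ = f⁽ᵏ⁾(0)/k!`,
`|f z| ≤ |z|ᵏ (|z| + |aₖ|) / (1 + |aₖ| |z|)` for all `z` in the disk. -/
theorem higher_order_interior_schwarz
    (f : ℂ → ℂ) (k : ℕ) (hk : 1 ≤ k)
    (ha : DifferentiableOn ℂ f {z : ℂ | ‖z‖ < 1})
    (hb : ∀ z : ℂ, ‖z‖ < 1 → ‖f z‖ < 1)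
    (hcoeff : ∀ n < k, iteratedDeriv n f 0 / (Nat.factorial n : ℂ) = 0) :
    ∀ z : ℂ, ‖z‖ < 1 →
      ‖f z‖ ≤ ‖z‖ ^ k *
        ((‖z‖ + ‖iteratedDeriv k f 0 / (Nat.factorial k : ℂ)‖) /
          (1 + ‖iteratedDeriv k f 0 / (Nat.factorial k : ℂ)‖ *
            ‖z‖)) :=
  higher_order_interior_schwarz_general f k ha hb hcoeff
end
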